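/- arXiv:1212.0069 — 4 statements merged into one kernel-verified Lean document; each statement's English description precedes it below -/
import Mathlib

section
/- Let {φ_{(t₁,…,t_k)}} be a smooth commutator-like k-parameter family of diffeomorphisms of a manifold P. Then the mixed partial derivative ∂^k φ_{(t₁,…,t_k)}/∂t₁⋯∂t_k evaluated at (0,…,0) is the first possibly non-vanishing derivative of the family at every point x ∈ P: all partial derivatives of φ_{(t₁,…,t_k)}(x) at 0 of order less than k vanish, and the k-th mixed derivative defines a smooth vector field on P. -/
/-!
Fix `x` and put `f t = φ_t x`. If the coordinate `t_j` is replaced by `0`, `f` becomes constant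
near `0`; composing with this linear projection shows that `D^m f(0)` vanishes on every family of
basis vectors avoiding `e_j`. For `m < k` every family of `m` basis vectors avoids some `e_j`, so
by multilinearity `D^m f(0) = 0`. Smoothness of `x ↦ D^k f(0)(e_1, …, e_k)` holds because the
`t`-derivatives of a map jointly smooth in `(t, x)` are again jointly smooth.
-/

open Set Filter Topology
open scoped ContDiff

section

variable {𝕜 : Type*} [NontriviallyNormedField 𝕜]
  {E F G : Type*} [NormedAddCommGroup E] [NormedSpace 𝕜 E] [NormedAddCommGroup F]
  [NormedSpace 𝕜 F] [NormedAddCommGroup G] [NormedSpace 𝕜 G]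
  {ι : Type*} [Fintype ι] [DecidableEq ι]

theorem ContinuousLinearMap.iteratedFDeriv_comp_right_of_isOpen (g : G →L[𝕜] E) {f : E → F}
    {s : Set E} {n : WithTop ℕ∞} (hs : IsOpen s) (hf : ContDiffOn 𝕜 n f s) {x : G}
    (hx : g x ∈ s) {i : ℕ} (hi : i ≤ n) :
    iteratedFDeriv 𝕜 i (f ∘ g) x =
      (iteratedFDeriv 𝕜 i f (g x)).compContinuousLinearMap fun _ => g := by
  have hs' : IsOpen (g ⁻¹' s) := hs.preimage g.continuous
  rw [← iteratedFDerivWithin_of_isOpen i hs' hx, ← iteratedFDerivWithin_of_isOpen i hs hx]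
  exact g.iteratedFDerivWithin_comp_right hf hs.uniqueDiffOn hs'.uniqueDiffOn hx hi

theorem iteratedFDeriv_apply_comp_eq_zero_of_comp_eventuallyEq_const (g : G →L[𝕜] E)
    {f : E → F} {s : Set E} {n : WithTop ℕ∞} (hs : IsOpen s) (hf : ContDiffOn 𝕜 n f s) {x : G}
    (hx : g x ∈ s) {c : F} (hc : f ∘ g =ᶠ[𝓝 x] fun _ => c) {i : ℕ} (hi₀ : i ≠ 0) (hi : i ≤ n)
    (v : Fin i → G) :
    iteratedFDeriv 𝕜 i f (g x) (fun j => g (v j)) = 0 := by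
  have h : iteratedFDeriv 𝕜 i (f ∘ g) x = 0 := by
    rw [(hc.iteratedFDeriv 𝕜 i).eq_of_nhds, iteratedFDeriv_const_of_ne hi₀, Pi.zero_apply]
  simpa [g.iteratedFDeriv_comp_right_of_isOpen hs hf hx hi] using congr($h v)

theorem ContDiffOn.iteratedFDeriv_fst {f : E × G → F} {s : Set (E × G)}
    (hs : IsOpen s) (hf : ContDiffOn 𝕜 ∞ f s) (n : ℕ) :
    ContDiffOn 𝕜 ∞ (fun q : E × G => iteratedFDeriv 𝕜 n (fun t => f (t, q.2)) q.1) s := by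
  induction n with
  | zero =>
    simp only [iteratedFDeriv_zero_eq_comp, Function.comp_apply]
    exact (continuousMultilinearCurryFin0 𝕜 E F).symm.contDiff.comp_contDiffOn hf
  | succ n ih =>
    have hD : ContDiffOn 𝕜 ∞
        (fun q : E × G => fderiv 𝕜 (iteratedFDeriv 𝕜 n fun t => f (t, q.2)) q.1) s := by
      intro q hq
      have hH : ContDiffAt 𝕜 ∞
          (fun p : (E × G) × E => iteratedFDeriv 𝕜 n (fun t => f (t, p.1.2)) p.2) (q, q.1) :=
        (ih.contDiffAt (hs.mem_nhds hq)).comp (f := fun p : (E × G) × E => (p.2, p.1.2)) (q, q.1)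
          (by fun_prop)
      exact (hH.fderiv contDiffAt_fst le_rfl).contDiffWithinAt
    exact hD.continuousLinearMap_comp
      ((continuousMultilinearCurryLeftEquiv 𝕜 (fun _ : Fin (n + 1) => E) F).symm :
        _ →L[𝕜] E [×(n + 1)]→L[𝕜] F)

theorem iteratedFDeriv_eq_zero_of_const_on_coordinate_hyperplanes {f : (ι → 𝕜) → F}
    {U : Set (ι → 𝕜)} {n : WithTop ℕ∞} (hU : IsOpen U) (h0 : 0 ∈ U) (hf : ContDiffOn 𝕜 n f U)
    {c : F} (hc : ∀ t ∈ U, (∃ j, t j = 0) → f t = c) {m : ℕ} (hm₀ : m ≠ 0)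
    (hm : m < Fintype.card ι) (hmn : m ≤ n) :
    iteratedFDeriv 𝕜 m f 0 = 0 := by
  apply ContinuousMultilinearMap.toMultilinearMap_injective
  refine Module.Basis.ext_multilinear (fun _ => Pi.basisFun 𝕜 ι) fun v => ?_
  obtain ⟨j, hj⟩ : ∃ j, ∀ s, v s ≠ j := by
    by_contra! h
    exact (Fintype.card_le_of_surjective v h).not_gt (by simpa using hm)
  set L : (ι → 𝕜) →L[𝕜] ι → 𝕜 := ContinuousLinearMap.id 𝕜 _ -
    (ContinuousLinearMap.single 𝕜 (fun _ => 𝕜) j).comp (ContinuousLinearMap.proj j)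
  have hL0 : L 0 ∈ U := by rwa [map_zero]
  have hLj (t : ι → 𝕜) : L t j = 0 := by simp [L]
  have hLv (s : Fin m) : L (Pi.single (v s) 1) = Pi.single (v s) 1 := by simp [L, hj s]
  have hconst : f ∘ L =ᶠ[𝓝 0] fun _ => c := by
    filter_upwards [L.continuous.continuousAt.preimage_mem_nhds (hU.mem_nhds hL0)] with t ht
    exact hc _ ht ⟨j, hLj t⟩
  simpa [hLv] using iteratedFDeriv_apply_comp_eq_zero_of_comp_eventuallyEq_const L hU hf hL0
    hconst hm₀ hmn fun s => Pi.single (v s) 1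

end

theorem commutatorLike_first_nonvanishing_derivative_general
    {P : Type*} [NormedAddCommGroup P] [NormedSpace ℝ P] {k : ℕ}
    (ε : ℝ) (hε : 0 < ε) (φ : (Fin k → ℝ) → P → P)
    (hsmooth : ContDiffOn ℝ (⊤ : ℕ∞) (fun q : (Fin k → ℝ) × P => φ q.1 q.2)
      ({t | ∀ i, |t i| < ε} ×ˢ Set.univ))
    (hcomm : ∀ t, (∀ i, |t i| < ε) → (∃ j, t j = 0) → φ t = id) :
    (∀ x : P, ∀ m : ℕ, 1 ≤ m → m < k →
        iteratedFDeriv ℝ m (fun t => φ t x) 0 = 0) ∧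
      ContDiff ℝ (⊤ : ℕ∞) (fun x : P =>
        iteratedFDeriv ℝ k (fun t => φ t x) 0 (fun i => Pi.single i 1)) := by
  set U : Set (Fin k → ℝ) := {t | ∀ i, |t i| < ε}
  have hU : IsOpen U := by
    simp only [U, ofPred_forall]
    exact isOpen_iInter_of_finite fun i => isOpen_lt (continuous_apply i).abs continuous_const
  have h0 : (0 : Fin k → ℝ) ∈ U := fun i => by simpa using hε
  refine ⟨fun x m hm₁ hmk => ?_, ?_⟩
  · have hx : ContDiffOn ℝ ∞ (fun t => φ t x) U :=
      hsmooth.comp (contDiff_id.prodMk contDiff_const).contDiffOn fun t ht => ⟨ht, trivial⟩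
    exact iteratedFDeriv_eq_zero_of_const_on_coordinate_hyperplanes hU h0 hx
      (fun t ht hj => by rw [hcomm t ht hj, id]) (by omega) (by simpa using hmk)
      (by exact_mod_cast le_top)
  · have hslice : ContDiff ℝ ∞ fun x : P => ((0 : Fin k → ℝ), x) := by fun_prop
    have h := (hsmooth.iteratedFDeriv_fst (hU.prod isOpen_univ) k).comp_contDiff
      hslice fun x => ⟨h0, trivial⟩
    exact (ContinuousMultilinearMap.apply ℝ _ P fun i => Pi.single i 1).contDiff.comp h

/-- for a smooth commutator-like `k`-parameter family `{φ_t}` of diffeomorphisms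
of `P` (equal to the identity whenever some parameter vanishes), the mixed partial derivative
`∂^k φ/∂t₁⋯∂t_k |₀` is the first possibly non-vanishing derivative at every point: all
derivatives of positive order `< k` of `t ↦ φ_t(x)` vanish at `0`, and the `k`-th mixed
derivative defines a smooth vector field on `P`. -/
theorem commutatorLike_first_nonvanishing_derivative
    {P : Type*} [NormedAddCommGroup P] [NormedSpace ℝ P] {k : ℕ}
    (ε : ℝ) (hε : 0 < ε) (φ : (Fin k → ℝ) → P → P)
    (hsmooth : ContDiffOn ℝ (⊤ : ℕ∞) (fun q : (Fin k → ℝ) × P => φ q.1 q.2)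
      ({t | ∀ i, |t i| < ε} ×ˢ Set.univ))
    (hdiffeo : ∀ t, (∀ i, |t i| < ε) → Function.Bijective (φ t))
    (hcomm : ∀ t, (∀ i, |t i| < ε) → (∃ j, t j = 0) → φ t = id) :
    (∀ x : P, ∀ m : ℕ, 1 ≤ m → m < k →
        iteratedFDeriv ℝ m (fun t => φ t x) 0 = 0) ∧
      ContDiff ℝ (⊤ : ℕ∞) (fun x : P =>
        iteratedFDeriv ℝ k (fun t => φ t x) 0 (fun i => Pi.single i 1)) :=
  commutatorLike_first_nonvanishing_derivative_general ε hε φ hsmooth hcomm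
end

section
/- Let H be a subgroup of Diff^∞(P). The set of vector fields on P tangent to H is closed under real linear combinations: if X and Y are tangent to H and a, b ∈ ℝ, then aX + bY is tangent to H. -/
noncomputable section

/-- A vector field `X` on `P` is *tangent* to a subgroup `H` of the diffeomorphism group of `P`
if there is a `C¹`-differentiable 1-parameter family `{φ_t ∈ H}`, `t ∈ (-ε, ε)`, of
diffeomorphisms with `φ₀ = Id` and `∂φ_t/∂t|_{t=0} = X`. -/
def IsTangentTo {P : Type*} [NormedAddCommGroup P] [NormedSpace ℝ P]
    (H : Set (P → P)) (X : P → P) : Prop :=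
  ∃ ε > (0 : ℝ), ∃ φ : ℝ → P → P,
    ContDiffOn ℝ 1 (fun q : ℝ × P => φ q.1 q.2) ({t | |t| < ε} ×ˢ Set.univ) ∧
    (∀ t, |t| < ε → φ t ∈ H) ∧
    φ 0 = id ∧
    ∀ x, HasDerivAt (fun t => φ t x) (X x) 0

/-! Reparametrizing a family `φ_t` tangent to `X` as `φ_{ct}` gives `cX`, and the
pointwise composition `φ_t ∘ ψ_t` of families tangent to `X` and `Y` stays in `H` and is tangent
to `X + Y`, since at `t = 0` both factors are the identity and the chain rule splits the
derivative of `t ↦ φ_t (ψ_t x)` into the two partial derivatives. -/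

lemma abs_mul_lt_of_lt_div_abs_add_one {c t ε : ℝ} (ht : |t| < ε / (|c| + 1)) :
    |c * t| < ε := by
  rw [lt_div_iff₀ (by positivity)] at ht
  rw [abs_mul]
  nlinarith [abs_nonneg c, abs_nonneg t]

lemma hasDerivAt_apply_curve_of_apply_zero_eq_id {E : Type*} [NormedAddCommGroup E]
    [NormedSpace ℝ E] {F : ℝ × E → E} {γ : ℝ → E} {v w : E}
    (hF : DifferentiableAt ℝ F (0, γ 0)) (hF₀ : ∀ p, F (0, p) = p)
    (hFt : HasDerivAt (fun t => F (t, γ 0)) v 0) (hγ : HasDerivAt γ w 0) :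
    HasDerivAt (fun t => F (t, γ t)) (v + w) 0 := by
  set f' := fderiv ℝ F (0, γ 0)
  have hF' : HasFDerivAt F f' (0, γ 0) := hF.hasFDerivAt
  have h_time : f' (1, 0) = v :=
    (hF'.comp_hasDerivAt 0 ((hasDerivAt_id 0).prodMk (hasDerivAt_const 0 (γ 0)))).unique hFt
  have h_space : f'.comp (ContinuousLinearMap.inr ℝ ℝ E) = ContinuousLinearMap.id ℝ E := by
    have h := hF'.comp (γ 0) (ContinuousLinearMap.inr ℝ ℝ E).hasFDerivAt
    simp only [Function.comp_def, hF₀] at h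
    exact h.unique (hasFDerivAt_id _)
  have h_split : ((1 : ℝ), w) = ((1 : ℝ), (0 : E)) + ContinuousLinearMap.inr ℝ ℝ E w := by
    simp
  have h := hF'.comp_hasDerivAt 0 ((hasDerivAt_id 0).prodMk hγ)
  rwa [h_split, map_add, ← f'.comp_apply, h_space, h_time] at h

section Tangent

variable {P : Type*} [NormedAddCommGroup P] [NormedSpace ℝ P] {H : Set (P → P)} {X Y : P → P}

lemma IsTangentTo.smul (hX : IsTangentTo H X) (c : ℝ) : IsTangentTo H (c • X) := by
  obtain ⟨ε, hε, φ, hφ, hφH, hφ₀, hφX⟩ := hX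
  refine ⟨ε / (|c| + 1), by positivity, fun t => φ (c * t), ?_,
    fun t ht => hφH _ (abs_mul_lt_of_lt_div_abs_add_one ht), by simpa using hφ₀, fun x => ?_⟩
  · have hrescale : ContDiff ℝ 1 (fun q : ℝ × P => (c * q.1, q.2)) := by fun_prop
    exact hφ.comp hrescale.contDiffOn
      fun q hq => ⟨abs_mul_lt_of_lt_div_abs_add_one hq.1, Set.mem_univ _⟩
  · simpa [Function.comp_def] using
      (hφX x).scomp_of_eq (𝕜 := ℝ) 0 ((hasDerivAt_id 0).const_mul c) (by simp)

lemma IsTangentTo.add (hcomp : ∀ f ∈ H, ∀ g ∈ H, f ∘ g ∈ H)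
    (hX : IsTangentTo H X) (hY : IsTangentTo H Y) : IsTangentTo H (X + Y) := by
  obtain ⟨ε₁, hε₁, φ, hφ, hφH, hφ₀, hφX⟩ := hX
  obtain ⟨ε₂, hε₂, ψ, hψ, hψH, hψ₀, hψY⟩ := hY
  have h₁ : ∀ {t : ℝ}, |t| < min ε₁ ε₂ → |t| < ε₁ := fun ht => ht.trans_le (min_le_left _ _)
  have h₂ : ∀ {t : ℝ}, |t| < min ε₁ ε₂ → |t| < ε₂ := fun ht => ht.trans_le (min_le_right _ _)
  refine ⟨min ε₁ ε₂, lt_min hε₁ hε₂, fun t => φ t ∘ ψ t, ?_,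
    fun t ht => hcomp _ (hφH t (h₁ ht)) _ (hψH t (h₂ ht)), by simp [hφ₀, hψ₀], fun x => ?_⟩
  · have hψ' : ContDiffOn ℝ 1 (fun q : ℝ × P => (q.1, ψ q.1 q.2))
        ({t | |t| < min ε₁ ε₂} ×ˢ Set.univ) :=
      contDiffOn_fst.prodMk (hψ.mono fun q hq => ⟨h₂ hq.1, Set.mem_univ _⟩)
    exact hφ.comp hψ' fun q hq => ⟨h₁ hq.1, Set.mem_univ _⟩
  · have hφ_diff : DifferentiableAt ℝ (fun q : ℝ × P => φ q.1 q.2) (0, ψ 0 x) :=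
      (hφ.contDiffAt (((isOpen_lt continuous_abs continuous_const).prod isOpen_univ).mem_nhds
        ⟨by simpa using hε₁, trivial⟩))
        |>.differentiableAt one_ne_zero
    have h := hasDerivAt_apply_curve_of_apply_zero_eq_id hφ_diff (by simp [hφ₀])
      (by simpa [hψ₀] using hφX x) (hψY x)
    simpa using h

end Tangent

theorem tangent_linear_combination_general
    {P : Type*} [NormedAddCommGroup P] [NormedSpace ℝ P]
    (H : Set (P → P))
    (hcomp : ∀ f ∈ H, ∀ g ∈ H, f ∘ g ∈ H)
    (X Y : P → P) (a b : ℝ)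
    (hX : IsTangentTo H X) (hY : IsTangentTo H Y) :
    IsTangentTo H (a • X + b • Y) :=
  (hX.smul a).add hcomp (hY.smul b)

/-- For a subgroup `H` of `Diff^∞(P)`, the set of vector fields tangent to `H`
is closed under real linear combinations. -/
theorem tangent_linear_combination
    {P : Type*} [NormedAddCommGroup P] [NormedSpace ℝ P]
    (H : Set (P → P))
    (hid : id ∈ H)
    (hcomp : ∀ f ∈ H, ∀ g ∈ H, f ∘ g ∈ H)
    (hinv : ∀ f ∈ H, ∃ g ∈ H, g ∘ f = id ∧ f ∘ g = id)
    (X Y : P → P) (a b : ℝ)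
    (hX : IsTangentTo H X) (hY : IsTangentTo H Y) :
    IsTangentTo H (a • X + b • Y) :=
  tangent_linear_combination_general H hcomp X Y a b hX hY
end
end

section
/- Every vector field ξ on the indicatrix bundle 𝓘M that is strongly tangent to the fibred holonomy group Hol_f(M) is vertical, i.e. π_*(ξ) = 0, and its restriction ξ_p = ξ|_{𝓘_pM} to each indicatrix fibre is strongly tangent to the holonomy group Hol(p). -/
/-! Applying a continuous linear map `L` commutes with the `k`-th mixed derivative at `0` of a
smooth family. Fibre preservation makes `π ∘ φ_t` independent of `t`, so the vertical claim
follows; composing the family with the fibre inclusion `y ↦ (p, y)` and the projection to the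
fibre gives a commutator-like family in `Hol(p)` with derivative `ξ_p`.
-/

noncomputable section

abbrev Vec (n : ℕ) := Fin n → ℝ

/-- `τ s` is the nonlinear parallel translation from `c 0` to `c s` along the curve `c`,
with respect to the nonlinear connection coefficients `N = (G^i_j)`:
the translated vectors `t ↦ τ t y₀` solve `dX^i/dt + G^i_j(c(t), X(t)) ċ^j(t) = 0`. -/
def IsParallelTransport {n : ℕ} (N : Vec n → Vec n → Fin n → Fin n → ℝ)
    (c : ℝ → Vec n) (τ : ℝ → Vec n → Vec n) : Prop :=
  (∀ y0, τ 0 y0 = y0) ∧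
  ∀ y0 t, HasDerivAt (fun s => τ s y0)
    (fun i => -(∑ j, N (c t) (τ t y0) i j * deriv c t j)) t

/-- The parallel translations along smooth loops based at `p`. -/
def loopTranslations {n : ℕ} (N : Vec n → Vec n → Fin n → Fin n → ℝ)
    (p : Vec n) : Set (Function.End (Vec n)) :=
  {φ | ∃ (c : ℝ → Vec n) (τ : ℝ → Vec n → Vec n),
    ContDiff ℝ (⊤ : ℕ∞) c ∧ c 0 = p ∧ c 1 = p ∧
    IsParallelTransport N c τ ∧ φ = τ 1}

/-- The holonomy group at `p`: the group of transformations of the fibre generated by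
parallel translations along (piecewise smooth) loops at `p`, realized as the closure of
the set of loop translations under composition. -/
def holonomy {n : ℕ} (N : Vec n → Vec n → Fin n → Fin n → ℝ)
    (p : Vec n) : Submonoid (Function.End (Vec n)) :=
  Submonoid.closure (loopTranslations N p)

/-- The fibred holonomy group: fibre preserving transformations of the indicatrix bundle
whose restriction to each fibre belongs to the holonomy group of that fibre. -/
def fibredHolonomy {n : ℕ} (N : Vec n → Vec n → Fin n → Fin n → ℝ) :
    Set (Vec n × Vec n → Vec n × Vec n) :=
  {Φ | (∀ q, (Φ q).1 = q.1) ∧ ∀ p, (fun y => (Φ (p, y)).2) ∈ holonomy N p}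

/-- A vector field `X` on `P` is *strongly tangent* to a set `H` of transformations of `P`
if there is a smooth commutator-like `k`-parameter family `{φ_{(t₁,…,t_k)} ∈ H}` (a family
which is the identity whenever some parameter vanishes) whose `k`-th mixed derivative at `0`
equals `X`. -/
def IsStronglyTangentTo {P : Type*} [NormedAddCommGroup P] [NormedSpace ℝ P]
    (H : Set (P → P)) (X : P → P) : Prop :=
  ∃ (k : ℕ), 0 < k ∧ ∃ ε > (0 : ℝ), ∃ φ : (Fin k → ℝ) → P → P,
    ContDiffOn ℝ (⊤ : ℕ∞) (fun q : (Fin k → ℝ) × P => φ q.1 q.2)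
      ({t | ∀ i, |t i| < ε} ×ˢ Set.univ) ∧
    (∀ t, (∀ i, |t i| < ε) → φ t ∈ H) ∧
    (∀ t, (∀ i, |t i| < ε) → (∃ j, t j = 0) → φ t = id) ∧
    ∀ x, iteratedFDeriv ℝ k (fun t => φ t x) 0 (fun i => Pi.single i 1) = X x

open Filter Topology

lemma setOf_forall_abs_lt_mem_nhds_zero {ι : Type*} [Finite ι] {ε : ℝ} (hε : 0 < ε) :
    {t : ι → ℝ | ∀ i, |t i| < ε} ∈ 𝓝 0 := by
  rw [Set.ofPred_forall]
  exact Filter.iInter_mem.2 fun i =>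
    (isOpen_lt (continuous_apply i).abs continuous_const).mem_nhds (by simpa using hε)

variable {P Q : Type*} [NormedAddCommGroup P] [NormedSpace ℝ P]
  [NormedAddCommGroup Q] [NormedSpace ℝ Q]

lemma iteratedFDeriv_clm_apply_family {k : ℕ} {ε : ℝ} (hε : 0 < ε) {φ : (Fin k → ℝ) → P → P}
    (hφ : ContDiffOn ℝ (⊤ : ℕ∞) (fun q : (Fin k → ℝ) × P => φ q.1 q.2)
      ({t | ∀ i, |t i| < ε} ×ˢ Set.univ))
    (L : P →L[ℝ] Q) (x : P) (m : Fin k → Fin k → ℝ) :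
    iteratedFDeriv ℝ k (fun t => L (φ t x)) 0 m = L (iteratedFDeriv ℝ k (fun t => φ t x) 0 m) := by
  have hφx : ContDiffAt ℝ (⊤ : ℕ∞) (fun t => φ t x) 0 :=
    (hφ.comp (contDiff_id.prodMk contDiff_const).contDiffOn fun t ht => ⟨ht, trivial⟩).contDiffAt
      (setOf_forall_abs_lt_mem_nhds_zero hε)
  exact congrArg (· m) (L.iteratedFDeriv_comp_left hφx (mod_cast le_top))

namespace IsStronglyTangentTo

theorem apply_eq_zero_of_forall_apply_eq {H : Set (P → P)} {X : P → P}
    (hX : IsStronglyTangentTo H X) (L : P →L[ℝ] Q) (hH : ∀ Φ ∈ H, ∀ x, L (Φ x) = L x) (x : P) :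
    L (X x) = 0 := by
  obtain ⟨k, hk, ε, hε, φ, hφ, hmem, -, hder⟩ := hX
  have hconst : (fun t => L (φ t x)) =ᶠ[𝓝 0] fun _ => L x :=
    Filter.mem_of_superset (setOf_forall_abs_lt_mem_nhds_zero hε) fun t ht => hH _ (hmem t ht) x
  rw [← hder, ← iteratedFDeriv_clm_apply_family hε hφ, (hconst.iteratedFDeriv ℝ k).eq_of_nhds,
    iteratedFDeriv_const_of_ne hk.ne']
  rfl

theorem restrict {H : Set (P → P)} {K : Set (Q → Q)} {X : P → P} (hX : IsStronglyTangentTo H X)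
    (π : P →L[ℝ] Q) {σ : Q → P} (hσ : ContDiff ℝ (⊤ : ℕ∞) σ) (hπσ : ∀ y, π (σ y) = y)
    (hHK : ∀ Φ ∈ H, π ∘ Φ ∘ σ ∈ K) : IsStronglyTangentTo K (π ∘ X ∘ σ) := by
  obtain ⟨k, hk, ε, hε, φ, hφ, hmem, hid, hder⟩ := hX
  refine ⟨k, hk, ε, hε, fun t => π ∘ φ t ∘ σ, ?_, fun t ht => hHK _ (hmem t ht), ?_, ?_⟩
  · exact π.contDiff.comp_contDiffOn <|
      hφ.comp (contDiff_fst.prodMk (hσ.comp contDiff_snd)).contDiffOn fun q hq => ⟨hq.1, trivial⟩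
  · intro t ht hzero
    funext y
    simp [hid t ht hzero, hπσ]
  · intro y
    simp only [Function.comp_apply]
    rw [iteratedFDeriv_clm_apply_family hε hφ, hder]

end IsStronglyTangentTo

/-- every vector field `ξ` on the indicatrix bundle strongly tangent to the
fibred holonomy group is vertical (`π_* ξ = 0`), and its restriction to each indicatrix
fibre is strongly tangent to the holonomy group of that fibre. -/
theorem stronglyTangent_fibred_vertical_and_fibrewise {n : ℕ}
    (N : Vec n → Vec n → Fin n → Fin n → ℝ)
    (ξ : Vec n × Vec n → Vec n × Vec n)
    (hξ : IsStronglyTangentTo (fibredHolonomy N) ξ) :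
    (∀ q : Vec n × Vec n, (ξ q).1 = 0) ∧
    ∀ p : Vec n, IsStronglyTangentTo
      ((holonomy N p : Set (Function.End (Vec n))))
      (fun y => (ξ (p, y)).2) :=
  ⟨hξ.apply_eq_zero_of_forall_apply_eq (.fst ℝ _ _) fun _ hΦ q => hΦ.1 q,
    fun p => hξ.restrict (.snd ℝ _ _) (contDiff_const.prodMk contDiff_id) (fun _ => rfl)
      fun _ hΦ => hΦ.2 p⟩
end
end

section
/- Let γ = x(t) be a smooth curve in a Finsler manifold (M,F) and y(t) = τ_t y(0) a parallel vector field along γ with y(0) ∈ 𝓘_{x(0)}M. A vertical vector field ξ_t = ξ(x(t), y(t)) along (x(t),y(t)) equals the Berwald translate (τ_t)_* ξ₀ ∘ τ_t⁻¹ for all t if and only if its Berwald horizontal covariant derivative along γ vanishes: (∂ξ^i/∂x^j − G^k_j ∂ξ^i/∂y^k + G^i_{jk} ξ^k) ẋ^j = 0. -/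
noncomputable section

/-!
Write `A t = ξ (x t) (y t)` and `B t = (dτ_t)_{y 0} (A 0)`. By the chain rule the Berwald
covariant derivative of `ξ` along the curve is `A' - Φ A`, where `Φ t` is the derivative in `y`
of the right-hand side `-G^i_j(x t, y) ẋ^j` of the parallel transport equation. Differentiating
the flow in its initial value gives the variational equation `B' = Φ B`; since `A 0 = B 0`,
uniqueness for linear ODEs shows that `A = B` exactly when `A' = Φ A`.

The variational equation is the limit of the difference quotients
`s⁻¹ (τ_t (y₀ + s ξ₀) - τ_t y₀)`: Gronwall's inequality keeps the perturbed trajectories in a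
tube where the right-hand side is uniformly Lipschitz, which bounds the quotients and their time derivatives
uniformly, so dominated convergence passes to the limit in their integral equations. Since the
flow is only anchored at time `0`, negative times are handled by reversing time.
-/

open Set Filter Topology MeasureTheory Metric
open scoped NNReal

theorem ContinuousOn.forall_lt_of_forall_Ico_lt {f : ℝ → ℝ} {a b c : ℝ}
    (hf : ContinuousOn f (Icc a b)) (h : ∀ t ∈ Icc a b, (∀ s ∈ Ico a t, f s < c) → f t < c) :
    ∀ t ∈ Icc a b, f t < c := by
  by_contra! hex
  have hclosed : IsClosed (Icc a b ∩ f ⁻¹' Ici c) :=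
    hf.preimage_isClosed_of_isClosed isClosed_Icc isClosed_Ici
  have hbdd : BddBelow (Icc a b ∩ f ⁻¹' Ici c) := ⟨a, fun t ht => ht.1.1⟩
  obtain ⟨⟨t₀, hIcc⟩, hft₀⟩ := hclosed.csInf_mem (let ⟨t, ht, hft⟩ := hex; ⟨t, ht, hft⟩) hbdd
  refine (h _ ⟨t₀, hIcc⟩ fun s hs => not_le.1 fun hfs => ?_).not_ge hft₀
  exact (csInf_le hbdd ⟨⟨hs.1, hs.2.le.trans hIcc⟩, hfs⟩).not_gt hs.2

section LimitOfSolutions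

variable {E : Type*} [NormedAddCommGroup E] [NormedSpace ℝ E]
  {ι : Type*} {l : Filter ι} {w ψ : ι → ℝ → E} {B G : ℝ → E} {a b C : ℝ}

theorem lipschitzOnWith_of_tendsto_of_norm_deriv_le [l.NeBot]
    (hw : ∀ᶠ s in l, ∀ t ∈ Icc a b, HasDerivAt (w s) (ψ s t) t)
    (hψC : ∀ᶠ s in l, ∀ t ∈ Icc a b, ‖ψ s t‖ ≤ C)
    (hwB : ∀ t ∈ Icc a b, Tendsto (fun s => w s t) l (𝓝 (B t))) :
    LipschitzOnWith C.toNNReal B (Icc a b) := by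
  refine LipschitzOnWith.of_dist_le_mul fun t ht t' ht' => ?_
  have hmvt : ∀ᶠ s in l, dist (w s t) (w s t') ≤ C * dist t t' :=
    (hw.and hψC).mono fun s ⟨hws, hψs⟩ => by
      simpa only [dist_eq_norm] using (convex_Icc a b).norm_image_sub_le_of_norm_hasDerivWithin_le
        (fun x hx => (hws x hx).hasDerivWithinAt) hψs ht' ht
  exact (le_of_tendsto ((hwB t ht).dist (hwB t' ht')) hmvt).trans
    (mul_le_mul_of_nonneg_right (Real.le_coe_toNNReal C) dist_nonneg)

theorem eq_add_integral_of_tendsto_of_hasDerivAt [CompleteSpace E] [l.IsCountablyGenerated]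
    [l.NeBot] (hw : ∀ᶠ s in l, ∀ t ∈ Icc a b, HasDerivAt (w s) (ψ s t) t)
    (hψ : ∀ᶠ s in l, ContinuousOn (ψ s) (Icc a b))
    (hψC : ∀ᶠ s in l, ∀ t ∈ Icc a b, ‖ψ s t‖ ≤ C)
    (hwB : ∀ t ∈ Icc a b, Tendsto (fun s => w s t) l (𝓝 (B t)))
    (hψG : ∀ t ∈ Icc a b, Tendsto (fun s => ψ s t) l (𝓝 (G t))) :
    ∀ t ∈ Icc a b, B t = B a + ∫ σ in a..t, G σ := by
  intro t ht
  have hsub : uIcc a t ⊆ Icc a b := by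
    rw [uIcc_of_le ht.1]; exact Icc_subset_Icc_right ht.2
  have hsub' : uIoc a t ⊆ Icc a b := uIoc_subset_uIcc.trans hsub
  have hftc : ∀ᶠ s in l, w s t = w s a + ∫ σ in a..t, ψ s σ :=
    (hw.and hψ).mono fun s ⟨hws, hψs⟩ => by
      rw [intervalIntegral.integral_eq_sub_of_hasDerivAt (fun x hx => hws x (hsub hx))
        ((hψs.mono hsub).intervalIntegrable), add_sub_cancel]
  have hdom : Tendsto (fun s => ∫ σ in a..t, ψ s σ) l (𝓝 (∫ σ in a..t, G σ)) :=
    intervalIntegral.tendsto_integral_filter_of_dominated_convergence (fun _ => C)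
      (hψ.mono fun s hψs => (hψs.mono hsub').aestronglyMeasurable measurableSet_uIoc)
      (hψC.mono fun s hψs => ae_of_all _ fun σ hσ => hψs σ (hsub' hσ))
      intervalIntegrable_const (ae_of_all _ fun σ hσ => hψG σ (hsub' hσ))
  exact tendsto_nhds_unique (hwB t ht)
    (((hwB a ⟨le_rfl, ht.1.trans ht.2⟩).add hdom).congr' (hftc.mono fun s hs => hs.symm))

end LimitOfSolutions

section PartialDerivative

variable {E : Type*} [NormedAddCommGroup E] [NormedSpace ℝ E] {H : ℝ × E → E}

theorem hasFDerivAt_comp_prodMk_right {t : ℝ} {v : E} (hH : DifferentiableAt ℝ H (t, v)) :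
    HasFDerivAt (fun w => H (t, w)) ((fderiv ℝ H (t, v)).comp (.inr ℝ ℝ E)) v :=
  hH.hasFDerivAt.comp v (hasFDerivAt_prodMk_right t v)

theorem continuous_fderiv_comp_prodMk_right (hH : ContDiff ℝ 1 H) :
    Continuous fun p : ℝ × E => fderiv ℝ (fun w => H (p.1, w)) p.2 := by
  have hd := hH.differentiable one_ne_zero
  simp only [fun p : ℝ × E => (hasFDerivAt_comp_prodMk_right (hd (p.1, p.2))).fderiv]
  exact (hH.continuous_fderiv one_ne_zero).clm_comp continuous_const

theorem exists_lipschitzOnWith_closedBall [ProperSpace E] (hH : ContDiff ℝ 1 H) {y : ℝ → E}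
    {a b : ℝ} (hy : ContinuousOn y (Icc a b)) :
    ∃ K : ℝ≥0, ∀ σ ∈ Icc a b, LipschitzOnWith K (fun w => H (σ, w)) (closedBall (y σ) 1) := by
  obtain ⟨M, hM⟩ := isCompact_Icc.exists_bound_of_continuousOn hy
  obtain ⟨K, hK⟩ := (hH.locallyLipschitz.locallyLipschitzOn (s := Icc a b ×ˢ closedBall 0 (M + 1))
    ).exists_lipschitzOnWith_of_compact (isCompact_Icc.prod (isCompact_closedBall 0 (M + 1)))
  refine ⟨K, fun σ hσ => LipschitzOnWith.of_dist_le_mul fun u hu u' hu' => ?_⟩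
  have hball : closedBall (y σ) 1 ⊆ closedBall 0 (M + 1) := fun x hx => by
    rw [mem_closedBall_zero_iff]
    linarith [norm_le_norm_add_norm_sub' x (y σ), mem_closedBall_iff_norm.1 hx, hM σ hσ]
  simpa [Prod.dist_eq] using hK.dist_le_mul (σ, u) ⟨hσ, hball hu⟩ (σ, u') ⟨hσ, hball hu'⟩

end PartialDerivative

section Flow

variable {E : Type*} [NormedAddCommGroup E] [NormedSpace ℝ E]

def IsFlow (H : ℝ × E → E) (τ : ℝ → E → E) : Prop :=
  (∀ z, τ 0 z = z) ∧ ∀ z t, HasDerivAt (fun s => τ s z) (H (t, τ t z)) t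

namespace IsFlow

variable {H : ℝ × E → E} {τ : ℝ → E → E} {y₀ : E}

theorem continuous (hτ : IsFlow H τ) (z : E) : Continuous fun s => τ s z :=
  continuous_iff_continuousAt.2 fun s => (hτ.2 z s).continuousAt

theorem reverse (hτ : IsFlow H τ) : IsFlow (fun p => -H (-p.1, p.2)) fun s => τ (-s) := by
  refine ⟨fun z => by simpa using hτ.1 z, fun z t => ?_⟩
  simpa [Function.comp_def] using (hτ.2 z (-t)).scomp t (hasDerivAt_neg t)

theorem dist_le_of_forall_dist_lt_one (hτ : IsFlow H τ) {K : ℝ≥0} {t : ℝ} {z : E}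
    (ht : 0 ≤ t)
    (hK : ∀ σ ∈ Ico 0 t, LipschitzOnWith K (fun w => H (σ, w)) (closedBall (τ σ y₀) 1))
    (hnear : ∀ σ ∈ Ico 0 t, dist (τ σ z) (τ σ y₀) < 1) :
    dist (τ t z) (τ t y₀) ≤ dist z y₀ * Real.exp (K * t) := by
  simpa using dist_le_of_trajectories_ODE_of_mem (v := fun σ w => H (σ, w))
    (s := fun σ => closedBall (τ σ y₀) 1) hK
    (hτ.continuous z).continuousOn (fun σ _ => (hτ.2 z σ).hasDerivWithinAt)
    (fun σ hσ => (hnear σ hσ).le) (hτ.continuous y₀).continuousOn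
    (fun σ _ => (hτ.2 y₀ σ).hasDerivWithinAt) (fun σ _ => mem_closedBall_self zero_le_one)
    (by rw [hτ.1, hτ.1]) t ⟨ht, le_rfl⟩

theorem dist_lt_one (hτ : IsFlow H τ) {K : ℝ≥0} {T : ℝ} {z : E}
    (hK : ∀ σ ∈ Icc 0 T, LipschitzOnWith K (fun w => H (σ, w)) (closedBall (τ σ y₀) 1))
    (hz : dist z y₀ ≤ Real.exp (-(K * T)) / 2) :
    ∀ t ∈ Icc 0 T, dist (τ t z) (τ t y₀) < 1 := by
  refine ((hτ.continuous z).dist (hτ.continuous y₀)).continuousOn.forall_lt_of_forall_Ico_lt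
    fun t ht hnear => (hτ.dist_le_of_forall_dist_lt_one ht.1
      (fun σ hσ => hK σ ⟨hσ.1, hσ.2.le.trans ht.2⟩) hnear).trans_lt ?_
  have : Real.exp (-(K * T)) * Real.exp (K * t) ≤ 1 := by
    rw [← Real.exp_add, Real.exp_le_one_iff]
    nlinarith [ht.2, K.2]
  nlinarith [Real.exp_pos (K * t), dist_nonneg (x := z) (y := y₀)]

theorem dist_le (hτ : IsFlow H τ) {K : ℝ≥0} {T : ℝ} {z : E}
    (hK : ∀ σ ∈ Icc 0 T, LipschitzOnWith K (fun w => H (σ, w)) (closedBall (τ σ y₀) 1))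
    (hz : dist z y₀ ≤ Real.exp (-(K * T)) / 2) :
    ∀ t ∈ Icc 0 T, dist (τ t z) (τ t y₀) ≤ dist z y₀ * Real.exp (K * t) := fun _ ht =>
  hτ.dist_le_of_forall_dist_lt_one ht.1 (fun σ hσ => hK σ ⟨hσ.1, hσ.2.le.trans ht.2⟩)
    fun σ hσ => hτ.dist_lt_one hK hz σ ⟨hσ.1, hσ.2.le.trans ht.2⟩

theorem exists_eventually_norm_slope_le [ProperSpace E] (hH : ContDiff ℝ 1 H)
    (hτ : IsFlow H τ) (y₀ ξ₀ : E) (T : ℝ) : ∃ C, ∀ᶠ s in 𝓝[≠] (0 : ℝ), ∀ t ∈ Icc 0 T,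
      ‖s⁻¹ • (H (t, τ t (y₀ + s • ξ₀)) - H (t, τ t y₀))‖ ≤ C := by
  obtain ⟨K, hK⟩ := exists_lipschitzOnWith_closedBall hH (hτ.continuous y₀).continuousOn
    (a := 0) (b := T)
  have hsmall : ∀ᶠ s in 𝓝 (0 : ℝ), ‖s • ξ₀‖ ≤ Real.exp (-(K * T)) / 2 :=
    ((continuous_id.smul continuous_const).tendsto' 0 0 (zero_smul ℝ ξ₀)).norm.eventually
      (ge_mem_nhds (by simp only [norm_zero]; positivity))
  refine ⟨K * (‖ξ₀‖ * Real.exp (K * T)),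
    ((eventually_nhdsWithin_of_eventually_nhds hsmall).and self_mem_nhdsWithin).mono
      fun s ⟨hs, hs0⟩ t ht => ?_⟩
  have hz : dist (y₀ + s • ξ₀) y₀ = |s| * ‖ξ₀‖ := by
    rw [dist_eq_norm, add_sub_cancel_left, norm_smul, Real.norm_eq_abs]
  have hz' : dist (y₀ + s • ξ₀) y₀ ≤ Real.exp (-(K * T)) / 2 := by
    rwa [hz, ← Real.norm_eq_abs, ← norm_smul]
  have hdist := hτ.dist_le hK hz' t ht
  rw [hz] at hdist
  have hnear : τ t (y₀ + s • ξ₀) ∈ closedBall (τ t y₀) 1 :=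
    mem_closedBall.2 (hτ.dist_lt_one hK hz' t ht).le
  calc ‖s⁻¹ • (H (t, τ t (y₀ + s • ξ₀)) - H (t, τ t y₀))‖
      = |s|⁻¹ * dist (H (t, τ t (y₀ + s • ξ₀))) (H (t, τ t y₀)) := by
        rw [norm_smul, norm_inv, Real.norm_eq_abs, dist_eq_norm]
    _ ≤ |s|⁻¹ * (K * (|s| * ‖ξ₀‖ * Real.exp (K * T))) := by
        gcongr
        exact ((hK t ht).dist_le_mul _ hnear _ (mem_closedBall_self zero_le_one)).trans
          (by gcongr; exact hdist.trans (by gcongr; exact ht.2))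
    _ = K * (‖ξ₀‖ * Real.exp (K * T)) := by field_simp [abs_ne_zero.2 hs0]

theorem tendsto_slope_fderiv (hτd : ∀ t, DifferentiableAt ℝ (τ t) y₀) (ξ₀ : E) (t : ℝ) :
    Tendsto (fun s : ℝ => s⁻¹ • (τ t (y₀ + s • ξ₀) - τ t y₀)) (𝓝[≠] 0)
      (𝓝 (fderiv ℝ (τ t) y₀ ξ₀)) :=
  hasLineDerivAt_iff_tendsto_slope_zero.1 ((hτd t).hasFDerivAt.hasLineDerivAt ξ₀)

theorem tendsto_slope_fderiv_comp (hH : ContDiff ℝ 1 H)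
    (hτd : ∀ t, DifferentiableAt ℝ (τ t) y₀) (ξ₀ : E) (t : ℝ) :
    Tendsto (fun s : ℝ => s⁻¹ • (H (t, τ t (y₀ + s • ξ₀)) - H (t, τ t y₀))) (𝓝[≠] 0)
      (𝓝 (fderiv ℝ (fun w => H (t, w)) (τ t y₀) (fderiv ℝ (τ t) y₀ ξ₀))) := by
  have hd : Tendsto (fun s : ℝ => τ t (y₀ + s • ξ₀) - τ t y₀) (𝓝[≠] 0) (𝓝 0) := by
    refine tendsto_nhdsWithin_of_tendsto_nhds (tendsto_sub_nhds_zero_iff.2 ?_)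
    have hline : Continuous fun s : ℝ => y₀ + s • ξ₀ :=
      continuous_const.add (continuous_id.smul continuous_const)
    simpa [Function.comp_def] using
      ((hτd t).continuousAt.comp_of_eq (hline.continuousAt (x := 0)) (by simp)).tendsto
  simpa using ((hasFDerivAt_comp_prodMk_right ((hH.differentiable one_ne_zero) (t, τ t y₀))
    ).differentiableAt.hasFDerivAt.hasFDerivWithinAt (s := univ)).lim hd (by simp)
    (tendsto_slope_fderiv hτd ξ₀ t)

theorem continuousOn_and_eq_integral_Icc [ProperSpace E] (hH : ContDiff ℝ 1 H)
    (hτ : IsFlow H τ) (hτd : ∀ t, DifferentiableAt ℝ (τ t) y₀) (ξ₀ : E) (T : ℝ) :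
    ContinuousOn (fun t => fderiv ℝ (τ t) y₀ ξ₀) (Icc 0 T) ∧
      ∀ t ∈ Icc 0 T, fderiv ℝ (τ t) y₀ ξ₀ =
        ξ₀ + ∫ σ in 0..t, fderiv ℝ (fun w => H (σ, w)) (τ σ y₀) (fderiv ℝ (τ σ) y₀ ξ₀) := by
  obtain ⟨C, hC⟩ := hτ.exists_eventually_norm_slope_le hH y₀ ξ₀ T
  have hw : ∀ᶠ s in 𝓝[≠] (0 : ℝ), ∀ t ∈ Icc 0 T,
      HasDerivAt (fun σ => s⁻¹ • (τ σ (y₀ + s • ξ₀) - τ σ y₀))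
        (s⁻¹ • (H (t, τ t (y₀ + s • ξ₀)) - H (t, τ t y₀))) t :=
    .of_forall fun s t _ => ((hτ.2 _ t).sub (hτ.2 y₀ t)).const_smul s⁻¹
  have hψ : ∀ᶠ s in 𝓝[≠] (0 : ℝ),
      ContinuousOn (fun t => s⁻¹ • (H (t, τ t (y₀ + s • ξ₀)) - H (t, τ t y₀))) (Icc 0 T) :=
    .of_forall fun s => Continuous.continuousOn <|
      ((hH.continuous.comp (continuous_id.prodMk (hτ.continuous _))).sub
        (hH.continuous.comp (continuous_id.prodMk (hτ.continuous y₀)))).const_smul s⁻¹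
  have hB₀ : fderiv ℝ (τ 0) y₀ ξ₀ = ξ₀ := by simp [show τ 0 = id from funext hτ.1]
  refine ⟨(lipschitzOnWith_of_tendsto_of_norm_deriv_le hw hC
    fun t _ => tendsto_slope_fderiv hτd ξ₀ t).continuousOn, fun t ht => ?_⟩
  simpa only [hB₀] using eq_add_integral_of_tendsto_of_hasDerivAt hw hψ hC
    (fun t _ => tendsto_slope_fderiv hτd ξ₀ t)
    (fun t _ => tendsto_slope_fderiv_comp hH hτd ξ₀ t) t ht

theorem continuousOn_and_eq_integral_Icc_neg [ProperSpace E] (hH : ContDiff ℝ 1 H)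
    (hτ : IsFlow H τ) (hτd : ∀ t, DifferentiableAt ℝ (τ t) y₀) (ξ₀ : E) (T : ℝ) :
    ContinuousOn (fun t => fderiv ℝ (τ t) y₀ ξ₀) (Icc (-T) 0) ∧
      ∀ t ∈ Icc (-T) 0, fderiv ℝ (τ t) y₀ ξ₀ =
        ξ₀ + ∫ σ in 0..t, fderiv ℝ (fun w => H (σ, w)) (τ σ y₀) (fderiv ℝ (τ σ) y₀ ξ₀) := by
  obtain ⟨hcont, hint⟩ := hτ.reverse.continuousOn_and_eq_integral_Icc
    (H := fun p => -H (-p.1, p.2)) (hH.comp (contDiff_fst.neg.prodMk contDiff_snd)).neg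
    (fun t => hτd (-t)) ξ₀ T
  have hneg : MapsTo (fun t : ℝ => -t) (Icc (-T) 0) (Icc 0 T) := fun t ht =>
    ⟨by linarith [ht.2], by linarith [ht.1]⟩
  refine ⟨by simpa [Function.comp_def] using hcont.comp continuous_neg.continuousOn hneg,
    fun t ht => ?_⟩
  have h := hint _ (hneg ht)
  simp only [neg_neg, fderiv_fun_neg, neg_apply, intervalIntegral.integral_neg] at h
  rw [h, intervalIntegral.integral_comp_neg
    (fun σ => fderiv ℝ (fun w => H (σ, w)) (τ σ y₀) (fderiv ℝ (τ σ) y₀ ξ₀)),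
    neg_neg, neg_zero, intervalIntegral.integral_symm, neg_neg]

theorem hasDerivAt_fderiv_apply [ProperSpace E] (hH : ContDiff ℝ 1 H) (hτ : IsFlow H τ)
    (hτd : ∀ t, DifferentiableAt ℝ (τ t) y₀) (ξ₀ : E) (t : ℝ) :
    HasDerivAt (fun s => fderiv ℝ (τ s) y₀ ξ₀)
      (fderiv ℝ (fun w => H (t, w)) (τ t y₀) (fderiv ℝ (τ t) y₀ ξ₀)) t := by
  set T := |t| + 1
  obtain ⟨hcont_pos, hint_pos⟩ := hτ.continuousOn_and_eq_integral_Icc hH hτd ξ₀ T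
  obtain ⟨hcont_neg, hint_neg⟩ := hτ.continuousOn_and_eq_integral_Icc_neg hH hτd ξ₀ T
  have hT : 0 ≤ T := by positivity
  have hIcc : Icc (-T) 0 ∪ Icc 0 T = Icc (-T) T := Icc_union_Icc_eq_Icc (by linarith) hT
  have hcont : ContinuousOn (fun s => fderiv ℝ (τ s) y₀ ξ₀) (Icc (-T) T) :=
    hIcc ▸ hcont_neg.union_of_isClosed hcont_pos isClosed_Icc isClosed_Icc
  have hG : ContinuousOn
      (fun σ => fderiv ℝ (fun w => H (σ, w)) (τ σ y₀) (fderiv ℝ (τ σ) y₀ ξ₀)) (Icc (-T) T) :=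
    ((continuous_fderiv_comp_prodMk_right hH).comp_continuousOn
      (continuousOn_id.prodMk (hτ.continuous y₀).continuousOn)).clm_apply hcont
  have hint : ∀ s ∈ Ioo (-T) T, fderiv ℝ (τ s) y₀ ξ₀ =
      ξ₀ + ∫ σ in 0..s, fderiv ℝ (fun w => H (σ, w)) (τ σ y₀) (fderiv ℝ (τ σ) y₀ ξ₀) :=
    fun s hs => (le_total s 0).elim (fun h => hint_neg s ⟨hs.1.le, h⟩)
      fun h => hint_pos s ⟨h, hs.2.le⟩
  have ht : t ∈ Ioo (-T) T := ⟨by linarith [neg_abs_le t], by linarith [le_abs_self t]⟩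
  have hsub : uIcc 0 t ⊆ Icc (-T) T := uIcc_subset_Icc ⟨by linarith, hT⟩ (Ioo_subset_Icc_self ht)
  refine (((intervalIntegral.integral_hasDerivAt_right ((hG.mono hsub).intervalIntegrable)
    ((hG.mono Ioo_subset_Icc_self).stronglyMeasurableAtFilter isOpen_Ioo t ht)
    (hG.continuousAt (Icc_mem_nhds ht.1 ht.2)))).const_add ξ₀).congr_of_eventuallyEq ?_
  exact eventually_of_mem (Ioo_mem_nhds ht.1 ht.2) hint

end IsFlow

end Flow

theorem eq_of_hasDerivAt_clm_apply {E : Type*} [NormedAddCommGroup E] [NormedSpace ℝ E]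
    {Φ : ℝ → E →L[ℝ] E} (hΦ : Continuous Φ) {f g : ℝ → E} {t₀ : ℝ}
    (hf : ∀ t, HasDerivAt f (Φ t (f t)) t) (hg : ∀ t, HasDerivAt g (Φ t (g t)) t)
    (h : f t₀ = g t₀) : f = g := by
  funext t
  set T := |t| + |t₀| + 1
  obtain ⟨K, hK⟩ := isCompact_Icc.exists_bound_of_continuousOn (hΦ.continuousOn (s := Icc (-T) T))
  have hLip : ∀ s ∈ Ioo (-T) T, LipschitzOnWith K.toNNReal (Φ s) univ := fun s hs =>
    ((Φ s).lipschitz.weaken (by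
      rw [← NNReal.coe_le_coe, coe_nnnorm]
      exact (hK s (Ioo_subset_Icc_self hs)).trans (Real.le_coe_toNNReal K))).lipschitzOnWith
  have hf' := continuous_iff_continuousAt.2 fun s => (hf s).continuousAt
  have hg' := continuous_iff_continuousAt.2 fun s => (hg s).continuousAt
  refine ODE_solution_unique_of_mem_Icc (v := fun s x => Φ s x) (a := -T) (b := T) hLip
    ⟨by linarith [neg_abs_le t₀, abs_nonneg t], by linarith [le_abs_self t₀, abs_nonneg t]⟩
    hf'.continuousOn (fun s _ => hf s) (fun _ _ => mem_univ _)
    hg'.continuousOn (fun s _ => hg s) (fun _ _ => mem_univ _) h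
    ⟨by linarith [neg_abs_le t, abs_nonneg t₀], by linarith [le_abs_self t, abs_nonneg t₀]⟩

theorem eq_iff_forall_deriv_eq_clm_apply {E : Type*} [NormedAddCommGroup E] [NormedSpace ℝ E]
    {Φ : ℝ → E →L[ℝ] E} (hΦ : Continuous Φ) {f f' g : ℝ → E} {t₀ : ℝ}
    (hf : ∀ t, HasDerivAt f (f' t) t) (hg : ∀ t, HasDerivAt g (Φ t (g t)) t)
    (h : f t₀ = g t₀) : f = g ↔ ∀ t, f' t = Φ t (f t) := by
  refine ⟨fun hfg t => (hf t).unique (hfg ▸ hg t), fun hf' => ?_⟩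
  exact eq_of_hasDerivAt_clm_apply hΦ (fun t => hf' t ▸ hf t) hg h

section Coordinates

variable {𝕜 E F G : Type*} [NontriviallyNormedField 𝕜] [NormedAddCommGroup E] [NormedSpace 𝕜 E]
  [NormedAddCommGroup F] [NormedSpace 𝕜 F] [NormedAddCommGroup G] [NormedSpace 𝕜 G]

theorem fderiv_uncurry_apply {f : E → F → G} {x : E} {y : F}
    (hf : DifferentiableAt 𝕜 (fun q : E × F => f q.1 q.2) (x, y)) (u : E) (v : F) :
    fderiv 𝕜 (fun q : E × F => f q.1 q.2) (x, y) (u, v) =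
      fderiv 𝕜 (fun x' => f x' y) x u + fderiv 𝕜 (fun y' => f x y') y v := by
  have hx : HasFDerivAt (fun x' => f x' y)
      ((fderiv 𝕜 (fun q : E × F => f q.1 q.2) (x, y)).comp (.inl 𝕜 E F)) x :=
    hf.hasFDerivAt.comp (f := fun x' => (x', y)) x (hasFDerivAt_prodMk_left x y)
  have hy : HasFDerivAt (fun y' => f x y')
      ((fderiv 𝕜 (fun q : E × F => f q.1 q.2) (x, y)).comp (.inr 𝕜 E F)) y :=
    hf.hasFDerivAt.comp (f := fun y' => (x, y')) y (hasFDerivAt_prodMk_right x y)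
  rw [hx.fderiv, hy.fderiv, ContinuousLinearMap.comp_apply, ContinuousLinearMap.comp_apply,
    ← map_add]
  simp

theorem fderiv_apply_apply {ι : Type*} [Fintype ι] {f : E → ι → 𝕜} {x : E}
    (hf : DifferentiableAt 𝕜 f x) (u : E) (i : ι) :
    fderiv 𝕜 f x u i = fderiv 𝕜 (fun x' => f x' i) x u := by
  rw [fderiv_apply hf]
  rfl

theorem ContinuousLinearMap.apply_eq_sum_mul {ι : Type*} [Fintype ι] [DecidableEq ι]
    (ℓ : (ι → 𝕜) →L[𝕜] 𝕜) (u : ι → 𝕜) : ℓ u = ∑ j, ℓ (Pi.single j 1) * u j := by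
  conv_lhs => rw [pi_eq_sum_univ' u]
  simp [mul_comm]

end Coordinates

section ConnectionField

variable {n : ℕ} {N : Vec n → Vec n → Fin n → Fin n → ℝ} {c : ℝ → Vec n}

/-- The right-hand side `-G^i_j(c t, w) ċ^j(t)` of the equation of parallel vector fields. -/
def connectionField (N : Vec n → Vec n → Fin n → Fin n → ℝ) (c : ℝ → Vec n)
    (p : ℝ × Vec n) : Vec n :=
  fun i => -∑ j, N (c p.1) p.2 i j * deriv c p.1 j

theorem contDiff_connectionField
    (hN : ContDiff ℝ (⊤ : ℕ∞) fun q : Vec n × Vec n => (fun i j => N q.1 q.2 i j :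
      Fin n → Fin n → ℝ))
    (hc : ContDiff ℝ (⊤ : ℕ∞) c) : ContDiff ℝ (⊤ : ℕ∞) (connectionField N c) := by
  have hc' : ContDiff ℝ (⊤ : ℕ∞) (deriv c) := (contDiff_infty_iff_deriv.1 hc).2
  refine contDiff_pi.2 fun i => (ContDiff.sum fun j _ => ContDiff.mul ?_ ?_).neg
  · exact (contDiff_pi.1 (contDiff_pi.1 hN i) j).comp
      ((hc.comp contDiff_fst).prodMk contDiff_snd)
  · exact (contDiff_pi.1 hc' j).comp contDiff_fst

theorem fderiv_connectionField_apply
    (hN : ∀ i j, Differentiable ℝ fun q : Vec n × Vec n => N q.1 q.2 i j)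
    (t : ℝ) (v u : Vec n) (i : Fin n) :
    fderiv ℝ (fun w => connectionField N c (t, w)) v u i =
      -∑ j, fderiv ℝ (fun w => N (c t) w i j) v u * deriv c t j := by
  have hNd : ∀ i j, DifferentiableAt ℝ (fun w => N (c t) w i j) v := fun i j =>
    (hN i j (c t, v)).comp v ((differentiableAt_const _).prodMk differentiableAt_id)
  have hi : ∀ i, HasFDerivAt (fun w => connectionField N c (t, w) i)
      (-∑ j, deriv c t j • fderiv ℝ (fun w => N (c t) w i j) v) v := fun i =>
    (HasFDerivAt.fun_sum fun j _ => (hNd i j).hasFDerivAt.mul_const (deriv c t j)).neg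
  have hd : DifferentiableAt ℝ (fun w => connectionField N c (t, w)) v :=
    differentiableAt_pi.2 fun i => (hi i).differentiableAt
  rw [fderiv_apply_apply hd u i, (hi i).fderiv]
  simp [mul_comm]

theorem sum_covariantDerivative_eq
    (hN : ∀ i j, Differentiable ℝ fun q : Vec n × Vec n => N q.1 q.2 i j)
    {ξ : Vec n → Vec n → Vec n} (hξ : Differentiable ℝ fun q : Vec n × Vec n => ξ q.1 q.2)
    (t : ℝ) (v : Vec n) (i : Fin n) :
    ∑ j, (fderiv ℝ (fun x' => ξ x' v i) (c t) (Pi.single j 1)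
        - ∑ k, N (c t) v k j * fderiv ℝ (fun y' => ξ (c t) y' i) v (Pi.single k 1)
        + ∑ k, fderiv ℝ (fun y' => N (c t) y' i j) v (Pi.single k 1) * ξ (c t) v k)
        * deriv c t j =
      (fderiv ℝ (fun q : Vec n × Vec n => ξ q.1 q.2) (c t, v)
          (deriv c t, connectionField N c (t, v))
        - fderiv ℝ (fun w => connectionField N c (t, w)) v (ξ (c t) v)) i := by
  have hx : DifferentiableAt ℝ (fun x' => ξ x' v) (c t) :=
    (hξ _).comp (f := fun x' => (x', v)) _ (differentiableAt_id.prodMk (differentiableAt_const _))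
  have hy : DifferentiableAt ℝ (fun y' => ξ (c t) y') v :=
    (hξ _).comp (f := fun y' => (c t, y')) _ ((differentiableAt_const _).prodMk differentiableAt_id)
  simp only [← ContinuousLinearMap.apply_eq_sum_mul]
  rw [Pi.sub_apply, fderiv_uncurry_apply (hξ _), Pi.add_apply, fderiv_connectionField_apply hN,
    fderiv_apply_apply hx, fderiv_apply_apply hy,
    ContinuousLinearMap.apply_eq_sum_mul _ (deriv c t),
    ContinuousLinearMap.apply_eq_sum_mul _ (connectionField N c (t, v))]
  simp only [connectionField, Finset.sum_add_distrib, Finset.sum_sub_distrib, add_mul, sub_mul,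
    Finset.sum_mul, Finset.mul_sum, Finset.sum_neg_distrib, mul_neg, sub_neg_eq_add]
  rw [sub_eq_add_neg (∑ j, _), Finset.sum_comm]
  congr 3
  exact Finset.sum_congr rfl fun _ _ => Finset.sum_congr rfl fun _ _ => by ring

end ConnectionField

theorem berwald_translate_iff_covariant_derivative_zero_general {n : ℕ}
    (N : Vec n → Vec n → Fin n → Fin n → ℝ)
    (hN : ContDiff ℝ (⊤ : ℕ∞) (fun q : Vec n × Vec n => (fun i j => N q.1 q.2 i j :
      Fin n → Fin n → ℝ)))
    (c : ℝ → Vec n) (hc : ContDiff ℝ (⊤ : ℕ∞) c)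
    (τ : ℝ → Vec n → Vec n) (hτ : IsParallelTransport N c τ)
    (hτsm : ∀ t, ContDiff ℝ (⊤ : ℕ∞) (τ t))
    -- `y t = τ_t y(0)` is the parallel vector field along `c`, starting on the indicatrix:
    (y : ℝ → Vec n) (hy : ∀ t, y t = τ t (y 0))
    -- a vertical vector field `ξ`, considered along `(x(t), y(t))`:
    (ξ : Vec n → Vec n → Vec n)
    (hξ : ContDiff ℝ (⊤ : ℕ∞) (fun q : Vec n × Vec n => ξ q.1 q.2)) :
    -- `ξ` is parallel (equal to the Berwald translate of its initial value) along the curve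
    (∀ t, ξ (c t) (y t) = fderiv ℝ (τ t) (y 0) (ξ (c 0) (y 0)))
      ↔
    -- iff the Berwald horizontal covariant derivative of `ξ` along the curve vanishes:
    (∀ t (i : Fin n),
      ∑ j, (fderiv ℝ (fun x' => ξ x' (y t) i) (c t) (Pi.single j 1)
        - ∑ k, N (c t) (y t) k j * fderiv ℝ (fun y' => ξ (c t) y' i) (y t) (Pi.single k 1)
        + ∑ k, fderiv ℝ (fun y' => N (c t) y' i j) (y t) (Pi.single k 1) * ξ (c t) (y t) k)
        * deriv c t j = 0) := by
  have hH : ContDiff ℝ 1 (connectionField N c) := (contDiff_connectionField hN hc).of_le (by simp)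
  have hflow : IsFlow (connectionField N c) τ := hτ
  have hNd : ∀ i j, Differentiable ℝ fun q : Vec n × Vec n => N q.1 q.2 i j := fun i j =>
    (contDiff_pi.1 (contDiff_pi.1 hN i) j).differentiable (by simp)
  have hτd : ∀ t, DifferentiableAt ℝ (τ t) (y 0) := fun t => (hτsm t).differentiable (by simp) _
  have hξd : Differentiable ℝ fun q : Vec n × Vec n => ξ q.1 q.2 := hξ.differentiable (by simp)
  have hyτ : ∀ t, τ t (y 0) = y t := fun t => (hy t).symm
  have hy' : ∀ t, HasDerivAt y (connectionField N c (t, y t)) t := fun t =>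
    hyτ t ▸ (hflow.2 (y 0) t).congr_of_eventuallyEq (.of_forall hy)
  have hΦ : Continuous fun t => fderiv ℝ (fun w => connectionField N c (t, w)) (y t) :=
    (continuous_fderiv_comp_prodMk_right hH).comp
      (continuous_id.prodMk (continuous_iff_continuousAt.2 fun t => (hy' t).continuousAt))
  have hB := fun t => hyτ t ▸ hflow.hasDerivAt_fderiv_apply hH hτd (ξ (c 0) (y 0)) t
  have hA : ∀ t, HasDerivAt (fun s => ξ (c s) (y s))
      (fderiv ℝ (fun q : Vec n × Vec n => ξ q.1 q.2) (c t, y t)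
        (deriv c t, connectionField N c (t, y t))) t := fun t =>
    (hξd _).hasFDerivAt.comp_hasDerivAt t
      ((hc.differentiable (by simp) t).hasDerivAt.prodMk (hy' t))
  have h₀ : ξ (c 0) (y 0) = fderiv ℝ (τ 0) (y 0) (ξ (c 0) (y 0)) := by
    simp [show τ 0 = id from funext hflow.1]
  rw [← funext_iff (f := fun t => ξ (c t) (y t)), eq_iff_forall_deriv_eq_clm_apply hΦ hA hB h₀]
  simp only [sum_covariantDerivative_eq hNd hξd, Pi.sub_apply, sub_eq_zero, ← funext_iff]

/-- along a curve `γ = x(t)` with parallel vector field `y(t) = τ_t y(0)`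
starting on the indicatrix, a vertical vector field `ξ_t = ξ(x(t), y(t))` coincides with
the Berwald translate `(τ_t)_* ξ₀ ∘ τ_t⁻¹` for all `t` if and only if its horizontal Berwald
covariant derivative along the curve vanishes:
`(∂ξ^i/∂x^j − G^k_j ∂ξ^i/∂y^k + G^i_{jk} ξ^k) ẋ^j = 0`. -/
theorem berwald_translate_iff_covariant_derivative_zero {n : ℕ}
    (N : Vec n → Vec n → Fin n → Fin n → ℝ)
    (hN : ContDiff ℝ (⊤ : ℕ∞) (fun q : Vec n × Vec n => (fun i j => N q.1 q.2 i j :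
      Fin n → Fin n → ℝ)))
    (F : Vec n → Vec n → ℝ)
    (c : ℝ → Vec n) (hc : ContDiff ℝ (⊤ : ℕ∞) c)
    (τ : ℝ → Vec n → Vec n) (hτ : IsParallelTransport N c τ)
    (hτsm : ∀ t, ContDiff ℝ (⊤ : ℕ∞) (τ t))
    -- `y t = τ_t y(0)` is the parallel vector field along `c`, starting on the indicatrix:
    (y : ℝ → Vec n) (hy : ∀ t, y t = τ t (y 0))
    (hy0 : F (c 0) (y 0) = 1)
    (hpar : ∀ t, HasDerivAt y (fun i => -(∑ j, N (c t) (y t) i j * deriv c t j)) t)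
    -- a vertical vector field `ξ`, considered along `(x(t), y(t))`:
    (ξ : Vec n → Vec n → Vec n)
    (hξ : ContDiff ℝ (⊤ : ℕ∞) (fun q : Vec n × Vec n => ξ q.1 q.2)) :
    -- `ξ` is parallel (equal to the Berwald translate of its initial value) along the curve
    (∀ t, ξ (c t) (y t) = fderiv ℝ (τ t) (y 0) (ξ (c 0) (y 0)))
      ↔
    -- iff the Berwald horizontal covariant derivative of `ξ` along the curve vanishes:
    (∀ t (i : Fin n),
      ∑ j, (fderiv ℝ (fun x' => ξ x' (y t) i) (c t) (Pi.single j 1)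
        - ∑ k, N (c t) (y t) k j * fderiv ℝ (fun y' => ξ (c t) y' i) (y t) (Pi.single k 1)
        + ∑ k, fderiv ℝ (fun y' => N (c t) y' i j) (y t) (Pi.single k 1) * ξ (c t) (y t) k)
        * deriv c t j = 0) :=
  berwald_translate_iff_covariant_derivative_zero_general N hN c hc τ hτ hτsm y hy ξ hξ
end
end
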